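/- Let k ∈ {3,4} and let Γ be a finite connected k-valent simple graph whose full automorphism group acts transitively on the arcs of Γ. Suppose Γ admits a non-identity automorphism g with fpr_{VΓ}(g) > 1/3 such that g fixes no arc of Γ, i.e. there is no pair of adjacent vertices u, w with u^g = u and w^g = w. Then either k = 4 and Γ is isomorphic to the Praeger–Xu graph C(r,1) for some r ≥ 3, or k = 3 and Γ is isomorphic to the complete bipartite graph K_{3,3}. -/

import Mathlib

open SimpleGraph

noncomputable def fpr {V : Type*} (g : V → V) : ℚ :=
  (Nat.card {v : V // g v = v} : ℚ) / (Nat.card V : ℚ)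

/-- The Praeger–Xu graph `C(r,s)`. -/
def praegerXu (r s : ℕ) : SimpleGraph (ZMod r × (Fin s → ZMod 2)) :=
  SimpleGraph.fromRel (fun a b =>
    b.1 = a.1 + 1 ∧ ∀ (i : Fin s) (h : (i : ℕ) + 1 < s), b.2 i = a.2 ⟨(i : ℕ) + 1, h⟩)

/-- The Split Praeger–Xu graph `S(C(r,s))`; `1` plays the role of `+`, `0` of `−`. -/
def splitPraegerXu (r s : ℕ) : SimpleGraph ((ZMod r × (Fin s → ZMod 2)) × Fin 2) :=
  SimpleGraph.fromRel (fun a b => a.2 = 1 ∧ b.2 = 0 ∧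
    (a.1 = b.1 ∨ (b.1.1 = a.1.1 + 1 ∧
      ∀ (i : Fin s) (h : (i : ℕ) + 1 < s), b.1.2 i = a.1.2 ⟨(i : ℕ) + 1, h⟩)))

def VertexTransitive {V : Type*} (Γ : SimpleGraph V) : Prop :=
  ∀ u v : V, ∃ e : Γ ≃g Γ, e u = v

def EdgeTransitive {V : Type*} (Γ : SimpleGraph V) : Prop :=
  ∀ u v u' v' : V, Γ.Adj u v → Γ.Adj u' v' →
    ∃ e : Γ ≃g Γ, (e u = u' ∧ e v = v') ∨ (e u = v' ∧ e v = u')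

def ArcTransitive {V : Type*} (Γ : SimpleGraph V) : Prop :=
  ∀ u v u' v' : V, Γ.Adj u v → Γ.Adj u' v' → ∃ e : Γ ≃g Γ, e u = u' ∧ e v = v'

-- exceptional graphs
def Psi1 : SimpleGraph (Fin 5) := ⊤

def Psi2 : SimpleGraph (Fin 5 × Fin 2) :=
  SimpleGraph.fromRel (fun a b => a.2 ≠ b.2 ∧ a.1 ≠ b.1)

def Psi3 : SimpleGraph ({v : Fin 3 → ZMod 2 // v ≠ 0} × Fin 2) :=
  SimpleGraph.fromRel (fun a b => a.2 ≠ b.2 ∧ ∑ i, a.1.1 i * b.1.1 i ≠ 0)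

instance : Fact (Nat.Prime 3) := ⟨by norm_num⟩

def Psi4 : SimpleGraph (Projectivization (ZMod 3) (Fin 3 → ZMod 3) × Fin 2) :=
  SimpleGraph.fromRel (fun a b => a.2 ≠ b.2 ∧ ∑ i, a.1.rep i * b.1.rep i = 0)

def kneser (n k : ℕ) : SimpleGraph {s : Finset (Fin n) // s.card = k} :=
  SimpleGraph.fromRel (fun a b => Disjoint a.1 b.1)

def Psi5 : SimpleGraph {s : Finset (Fin 7) // s.card = 3} := kneser 7 3

def doubleCover {V : Type*} (G : SimpleGraph V) : SimpleGraph (V × Fin 2) :=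
  SimpleGraph.fromRel (fun a b => a.2 ≠ b.2 ∧ G.Adj a.1 b.1)

def Psi6 := doubleCover Psi5

def Lambda1 : SimpleGraph (Fin 4) := ⊤
def Lambda2 : SimpleGraph (Fin 3 ⊕ Fin 3) := completeBipartiteGraph (Fin 3) (Fin 3)
def cubeGraph : SimpleGraph (Fin 3 → ZMod 2) :=
  SimpleGraph.fromRel (fun a b => (Finset.univ.filter fun i => a i ≠ b i).card = 1)
def Lambda3 := cubeGraph
def Lambda4 : SimpleGraph {s : Finset (Fin 5) // s.card = 2} := kneser 5 2
def Lambda5 : SimpleGraph ({v : Fin 3 → ZMod 2 // v ≠ 0} × Fin 2) :=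
  SimpleGraph.fromRel (fun a b => a.2 ≠ b.2 ∧ ∑ i, a.1.1 i * b.1.1 i = 0)
def Lambda6 := doubleCover Lambda4

-- tau, rho, sigma
def tauFun (r s : ℕ) (i : ZMod r) :
    ZMod r × (Fin s → ZMod 2) → ZMod r × (Fin s → ZMod 2) :=
  fun a => (a.1, fun j => if a.1 + ((j : ℕ) : ZMod r) = i then a.2 j + 1 else a.2 j)

lemma tauFun_involutive (r s : ℕ) (i : ZMod r) : Function.Involutive (tauFun r s i) := by
  intro a
  unfold tauFun
  refine Prod.ext rfl ?_
  funext j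
  by_cases h : a.1 + ((j : ℕ) : ZMod r) = i
  · simp only [h, if_pos]
    rw [add_assoc, show (1 : ZMod 2) + 1 = 0 from rfl, add_zero]
  · simp [h]

/-- The permutation `τ_i` of the vertices of `C(r,s)`. -/
def tauPerm (r s : ℕ) (i : ZMod r) : Equiv.Perm (ZMod r × (Fin s → ZMod 2)) :=
  (tauFun_involutive r s i).toPerm

def rhoPerm (r s : ℕ) : Equiv.Perm (ZMod r × (Fin s → ZMod 2)) :=
  (Equiv.addRight (1 : ZMod r)).prodCongr (Equiv.refl _)

def sigmaFun (r s : ℕ) :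
    ZMod r × (Fin s → ZMod 2) → ZMod r × (Fin s → ZMod 2) :=
  fun a => (1 - (s : ZMod r) - a.1, fun j => a.2 j.rev)

lemma sigmaFun_involutive (r s : ℕ) : Function.Involutive (sigmaFun r s) := by
  intro a
  unfold sigmaFun
  refine Prod.ext ?_ ?_
  · simp only
    ring
  · funext j
    simp [Fin.rev_rev]

def sigmaPerm (r s : ℕ) : Equiv.Perm (ZMod r × (Fin s → ZMod 2)) :=
  (sigmaFun_involutive r s).toPerm

/-- The group `K = ⟨τ_i : i ∈ ZMod r⟩`. -/
def pxK (r s : ℕ) : Subgroup (Equiv.Perm (ZMod r × (Fin s → ZMod 2))) :=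
  Subgroup.closure (Set.range (tauPerm r s))

/-- The group `H = ⟨K, ρ, σ⟩`. -/
def pxH (r s : ℕ) : Subgroup (Equiv.Perm (ZMod r × (Fin s → ZMod 2))) :=
  Subgroup.closure (Set.range (tauPerm r s) ∪ {rhoPerm r s, sigmaPerm r s})

/-- Quotient graph of `Γ` by the orbits of a group action. -/
def quotGraph {V : Type*} (G : Type*) [Group G] [MulAction G V] (Γ : SimpleGraph V) :
    SimpleGraph (MulAction.orbitRel.Quotient G V) :=
  SimpleGraph.fromRel (fun a b => ∃ u v : V,
    (Quotient.mk (MulAction.orbitRel G V) u : MulAction.orbitRel.Quotient G V) = a ∧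
    (Quotient.mk (MulAction.orbitRel G V) v : MulAction.orbitRel.Quotient G V) = b ∧
    Γ.Adj u v)

/-!
If `Γ` had no twins (distinct vertices with the same neighbourhood), a vertex moved by `g` would
have at most `k - 2` fixed neighbours (for `k = 4` this needs arc-transitivity), while all `k`
neighbours of a fixed vertex are moved; double counting the edges between fixed and moved
vertices then gives `fpr(g) ≤ 1/3`. So `Γ` has twins, and by vertex-transitivity all twin
classes have the same size `c ≥ 2`. Every neighbourhood is a union of twin classes. If `c = k`,
then `Γ = K_{k,k}`, and `K_{4,4} ≅ C(4,1)`. Otherwise `k = 4` and `c = 2`: the quotient of `Γ` by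
its twin classes is connected and `2`-regular, hence a cycle `C_r`, and `Γ` is its blow-up
`C_r[2K_1] = C(r,1)`.
-/

lemma natCard_lt_mul_natCard_fixedPoints {V : Type*} [Finite V] {f : V → V} {n : ℕ}
    (hn : 0 < n) (h : 1 / (n : ℚ) < fpr f) : Nat.card V < n * Nat.card {v // f v = v} := by
  rw [fpr] at h
  rcases (Nat.card V).eq_zero_or_pos with h0 | h0
  · rw [h0, Nat.cast_zero, div_zero] at h
    exact absurd h (not_lt.mpr (by positivity))
  · rw [div_lt_div_iff₀ (by exact_mod_cast hn) (by exact_mod_cast h0), one_mul, mul_comm] at h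
    exact_mod_cast h

namespace SimpleGraph

variable {V : Type*} {Γ : SimpleGraph V}

lemma Preconnected.mem_of_adj_closed (h : Γ.Preconnected) {s : Set V} {x : V} (hx : x ∈ s)
    (hs : ∀ u v, Γ.Adj u v → u ∈ s → v ∈ s) (y : V) : y ∈ s := by
  obtain ⟨p⟩ := h x y
  induction p with
  | nil => exact hx
  | cons hadj _ ih => exact ih (hs _ _ hadj hx)

lemma Iso.image_commonNeighbors (e : Γ ≃g Γ) (x y : V) :
    e '' Γ.commonNeighbors x y = Γ.commonNeighbors (e x) (e y) := by
  simp only [commonNeighbors_eq, Set.image_inter e.injective, Iso.image_neighborSet]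

lemma ArcTransitive.vertexTransitive (hat : ArcTransitive Γ)
    (hne : ∀ v, (Γ.neighborSet v).Nonempty) : VertexTransitive Γ := fun u v => by
  obtain ⟨u', hu'⟩ := hne u
  obtain ⟨v', hv'⟩ := hne v
  obtain ⟨e, he, -⟩ := hat u u' v v' hu' hv'
  exact ⟨e, he⟩

lemma ArcTransitive.exists_ncard_commonNeighbors_eq (hat : ArcTransitive Γ) {x y c u : V}
    (hxy : Γ.Adj x y) (hyc : Γ.Adj y c) (hxc : x ≠ c) (hux : Γ.Adj u x) :
    ∃ d, Γ.Adj x d ∧ u ≠ d ∧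
      (Γ.commonNeighbors u d).ncard = (Γ.commonNeighbors x c).ncard := by
  obtain ⟨e, hex, hey⟩ := hat x y u x hxy hux
  refine ⟨e c, hey ▸ e.map_adj_iff.mpr hyc, hex ▸ e.injective.ne hxc, ?_⟩
  rw [← hex, ← e.image_commonNeighbors, Set.ncard_image_of_injective _ e.injective]

section FixedPoints

variable (g : Γ ≃g Γ)

lemma Iso.adj_apply_iff_of_apply_eq {v b : V} (hv : g v = v) :
    Γ.Adj v (g b) ↔ Γ.Adj v b := by
  conv_lhs => rw [← hv]
  exact g.map_adj_iff

/-- The difference of the two neighbourhoods is a `g`-invariant set of at most one vertex, so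
it would contain a fixed arc. -/
lemma neighborSet_eq_of_fixed [Finite V] {k : ℕ} (hval : ∀ v, (Γ.neighborSet v).ncard = k)
    (hno : ∀ u w, Γ.Adj u w → g u = u → g w ≠ w) {v₁ v₂ : V} (h₁ : g v₁ = v₁)
    (h₂ : g v₂ = v₂) (hcn : k ≤ (Γ.commonNeighbors v₁ v₂).ncard + 1) :
    Γ.neighborSet v₁ = Γ.neighborSet v₂ := by
  have hD : (Γ.neighborSet v₁ \ Γ.neighborSet v₂).ncard ≤ 1 := by
    have := Set.ncard_inter_add_ncard_sdiff_eq_ncard (Γ.neighborSet v₁) (Γ.neighborSet v₂)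
    rw [hval, ← commonNeighbors_eq] at this
    omega
  have hgD : ∀ d ∈ Γ.neighborSet v₁ \ Γ.neighborSet v₂,
      g d ∈ Γ.neighborSet v₁ \ Γ.neighborSet v₂ := fun d hd =>
    ⟨(g.adj_apply_iff_of_apply_eq h₁).mpr hd.1,
      fun h => hd.2 ((g.adj_apply_iff_of_apply_eq h₂).mp h)⟩
  have hempty : Γ.neighborSet v₁ \ Γ.neighborSet v₂ = ∅ :=
    Set.eq_empty_of_forall_notMem fun d hd =>
      hno v₁ d hd.1 h₁ ((Set.ncard_le_one_iff).mp hD (hgD d hd) hd)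
  exact Set.eq_of_subset_of_ncard_le (Set.sdiff_eq_empty.mp hempty) (by rw [hval, hval])

/-- `g` permutes the three neighbours of the fixed vertex `v` without fixed points, hence
cyclically. -/
lemma Iso.apply_apply_ne_of_ncard_eq_three [Finite V]
    (hno : ∀ u w, Γ.Adj u w → g u = u → g w ≠ w) {v b : V}
    (hv3 : (Γ.neighborSet v).ncard = 3) (hv : g v = v) (hb : Γ.Adj v b) : g (g b) ≠ b := by
  intro hggb
  have hgb : g b ≠ b := hno v b hb hv
  have hsub : {b, g b} ⊆ Γ.neighborSet v := by
    simp [Set.insert_subset_iff, hb, (g.adj_apply_iff_of_apply_eq hv).mpr hb]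
  obtain ⟨c, hc⟩ := Set.ncard_eq_one.mp (show (Γ.neighborSet v \ {b, g b}).ncard = 1 by
    rw [Set.ncard_sdiff hsub, hv3, Set.ncard_pair hgb.symm])
  have hcmem : c ∈ Γ.neighborSet v \ {b, g b} := hc ▸ rfl
  have hgc : g c ∈ Γ.neighborSet v \ {b, g b} := by
    refine ⟨(g.adj_apply_iff_of_apply_eq hv).mpr hcmem.1, ?_⟩
    rintro (h | h)
    · exact hcmem.2 (.inr (g.injective (h.trans hggb.symm)))
    · exact hcmem.2 (.inl (g.injective h))
  rw [hc] at hgc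
  exact hno v c hcmem.1 hv hgc

lemma neighborSet_eq_of_valency_three [Finite V] (hval : ∀ v, (Γ.neighborSet v).ncard = 3)
    (hno : ∀ u w, Γ.Adj u w → g u = u → g w ≠ w) {v₁ v₂ b : V} (h₁ : g v₁ = v₁)
    (h₂ : g v₂ = v₂) (hb₁ : Γ.Adj v₁ b) (hb₂ : Γ.Adj v₂ b) :
    Γ.neighborSet v₁ = Γ.neighborSet v₂ := by
  have hcommon : ∀ c, Γ.Adj v₁ c → Γ.Adj v₂ c → c ∈ Γ.commonNeighbors v₁ v₂ ∧
      g c ∈ Γ.commonNeighbors v₁ v₂ := fun c hc₁ hc₂ =>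
    ⟨⟨hc₁, hc₂⟩, (g.adj_apply_iff_of_apply_eq h₁).mpr hc₁,
      (g.adj_apply_iff_of_apply_eq h₂).mpr hc₂⟩
  obtain ⟨hb, hgb⟩ := hcommon b hb₁ hb₂
  have hggb := (hcommon (g b) hgb.1 hgb.2).2
  have hcn : 2 < (Γ.commonNeighbors v₁ v₂).ncard :=
    (Set.two_lt_ncard_iff).mpr ⟨b, g b, g (g b), hb, hgb, hggb, (hno v₁ b hb₁ h₁).symm,
      (g.apply_apply_ne_of_ncard_eq_three hno (hval v₁) h₁ hb₁).symm,
      g.injective.ne (hno v₁ b hb₁ h₁).symm⟩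
  exact neighborSet_eq_of_fixed g hval hno h₁ h₂ (by omega)

lemma exists_adj_apply_ne_of_injective (hinj : Function.Injective Γ.neighborSet) {b : V}
    (hb : g b ≠ b) : ∃ w, Γ.Adj b w ∧ g w ≠ w := by
  by_contra! h
  refine hb (hinj ?_)
  rw [← g.image_neighborSet, Set.image_congr (show ∀ y ∈ Γ.neighborSet b, g y = y from h),
    Set.image_id']

lemma not_adj_apply_of_forall_adj {b w : V} (hw : g w ≠ w)
    (hb : ∀ y, Γ.Adj b y → y = w ∨ g y = y) : ¬ Γ.Adj w (g b) := by
  intro h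
  have hb' : Γ.Adj b (g.symm w) := by simpa using g.symm.map_adj_iff.mpr h.symm
  rcases hb _ hb' with h' | h' <;> apply hw
  · nth_rewrite 1 [← h']
    simp
  · simpa using congrArg g h'

/-- If `b` had three fixed neighbours `vᵢ` in a twin-free graph, its fourth neighbour `w` would
be moved by `g`; arc-transitivity transports the three common neighbours of `b` and `g b` to
three common neighbours of `v₁, w` and of `v₂, w`, and counting inside `N(w)` then gives three
common neighbours of `v₁` and `v₂`. -/
lemma not_injective_neighborSet_of_valency_four [Finite V]
    (hval : ∀ v, (Γ.neighborSet v).ncard = 4) (hat : ArcTransitive Γ)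
    (hno : ∀ u w, Γ.Adj u w → g u = u → g w ≠ w) {v₁ v₂ v₃ b : V}
    (h₁ : g v₁ = v₁) (h₂ : g v₂ = v₂) (h₃ : g v₃ = v₃) (h₁₂ : v₁ ≠ v₂) (h₁₃ : v₁ ≠ v₃)
    (h₂₃ : v₂ ≠ v₃) (hb₁ : Γ.Adj v₁ b) (hb₂ : Γ.Adj v₂ b) (hb₃ : Γ.Adj v₃ b) :
    ¬ Function.Injective Γ.neighborSet := by
  intro hinj
  have hgb : g b ≠ b := hno v₁ b hb₁ h₁
  obtain ⟨w, hbw, hw⟩ := exists_adj_apply_ne_of_injective g hinj hgb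
  have hNb : ∀ y, Γ.Adj b y → y = w ∨ g y = y := by
    have hsub : {v₁, v₂, v₃} ⊆ Γ.neighborSet b \ {w} := by
      simp only [Set.insert_subset_iff, Set.singleton_subset_iff]
      exact ⟨⟨hb₁.symm, fun h => hw (h ▸ h₁)⟩, ⟨hb₂.symm, fun h => hw (h ▸ h₂)⟩,
        ⟨hb₃.symm, fun h => hw (h ▸ h₃)⟩⟩
    have heq := Set.eq_of_subset_of_ncard_le hsub (by
      rw [Set.ncard_sdiff_singleton_of_mem (show w ∈ Γ.neighborSet b from hbw), hval,
        Set.ncard_eq_three.mpr ⟨v₁, v₂, v₃, h₁₂, h₁₃, h₂₃, rfl⟩])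
    intro y hy
    refine or_iff_not_imp_left.mpr fun hyw => ?_
    have : y ∈ ({v₁, v₂, v₃} : Set V) := heq ▸ ⟨hy, hyw⟩
    rcases this with rfl | rfl | rfl <;> assumption
  have hgb₁ : Γ.Adj v₁ (g b) := (g.adj_apply_iff_of_apply_eq h₁).mpr hb₁
  have hcn : 2 < (Γ.commonNeighbors b (g b)).ncard :=
    (Set.two_lt_ncard_iff).mpr ⟨v₁, v₂, v₃, ⟨hb₁.symm, hgb₁.symm⟩,
      ⟨hb₂.symm, ((g.adj_apply_iff_of_apply_eq h₂).mpr hb₂).symm⟩,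
      ⟨hb₃.symm, ((g.adj_apply_iff_of_apply_eq h₃).mpr hb₃).symm⟩, h₁₂, h₁₃, h₂₃⟩
  have hcn_w : ∀ u, g u = u → Γ.Adj u b → 2 < (Γ.commonNeighbors u w).ncard := by
    intro u hu hub
    obtain ⟨y, hby, huy, hy⟩ := hat.exists_ncard_commonNeighbors_eq hb₁.symm hgb₁ hgb.symm hub
    rcases hNb y hby with rfl | hy'
    · exact hy ▸ hcn
    · exact absurd (hinj (neighborSet_eq_of_fixed g hval hno hu hy' (by omega))) huy
  have hinter : 2 ≤ (Γ.commonNeighbors v₁ w ∩ Γ.commonNeighbors v₂ w).ncard := by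
    have hsub : Γ.commonNeighbors v₁ w ∪ Γ.commonNeighbors v₂ w ⊆ Γ.neighborSet w := by
      simp only [commonNeighbors_eq, Set.union_subset_iff, Set.inter_subset_right, and_self]
    have := Set.ncard_union_add_ncard_inter (Γ.commonNeighbors v₁ w) (Γ.commonNeighbors v₂ w)
    have := Set.ncard_le_ncard hsub
    have := hcn_w v₁ h₁ hb₁
    have := hcn_w v₂ h₂ hb₂
    have := hval w
    omega
  have hcn₁₂ : 2 < (Γ.commonNeighbors v₁ v₂).ncard := by
    have hsub : insert (g b) (Γ.commonNeighbors v₁ w ∩ Γ.commonNeighbors v₂ w) ⊆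
        Γ.commonNeighbors v₁ v₂ :=
      Set.insert_subset ⟨hgb₁, (g.adj_apply_iff_of_apply_eq h₂).mpr hb₂⟩
        fun x hx => ⟨hx.1.1, hx.2.1⟩
    have := Set.ncard_le_ncard hsub
    rw [Set.ncard_insert_of_notMem fun h => not_adj_apply_of_forall_adj g hw hNb h.1.2] at this
    omega
  exact h₁₂ (hinj (neighborSet_eq_of_fixed g hval hno h₁ h₂ (by omega)))

lemma card_fixed_mul_le_card_moved_mul [Fintype V] [DecidableEq V] {k m : ℕ}
    (hval : ∀ v, (Γ.neighborSet v).ncard = k) (hno : ∀ u w, Γ.Adj u w → g u = u → g w ≠ w)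
    (hm : ∀ b, g b ≠ b → (Γ.neighborSet b ∩ {v | g v = v}).ncard ≤ m) :
    (Finset.univ.filter fun v => g v = v).card * k ≤
      (Finset.univ.filter fun v => g v ≠ v).card * m := by
  classical
  refine Finset.card_mul_le_card_mul (fun a b => Γ.Adj a b) (fun a ha => ?_) (fun b hb => ?_)
  · rw [← hval a, ← Set.ncard_coe_finset]
    refine Set.ncard_le_ncard fun w hw => ?_
    simp only [Finset.mem_filter, Finset.mem_univ, true_and] at ha
    simpa [Finset.bipartiteAbove] using ⟨hno a w hw ha, hw⟩
  · simp only [Finset.mem_filter, Finset.mem_univ, true_and] at hb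
    refine le_trans (le_of_eq ?_) (hm b hb)
    rw [← Set.ncard_coe_finset]
    congr 1
    ext v
    simp [Finset.bipartiteBelow, adj_comm, and_comm]

theorem not_injective_neighborSet [Fintype V] {k : ℕ} (hk : k = 3 ∨ k = 4)
    (hval : ∀ v, (Γ.neighborSet v).ncard = k) (hat : ArcTransitive Γ)
    (hno : ∀ u w, Γ.Adj u w → g u = u → g w ≠ w)
    (hfix : Nat.card V < 3 * Nat.card {v // g v = v}) :
    ¬ Function.Injective Γ.neighborSet := by
  classical
  intro hinj
  have hm : ∀ b, g b ≠ b → (Γ.neighborSet b ∩ {v | g v = v}).ncard ≤ k - 2 := by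
    intro b hb
    by_contra! h
    rcases hk with rfl | rfl
    · obtain ⟨v₁, ⟨hb₁, h₁⟩, v₂, ⟨hb₂, h₂⟩, h₁₂⟩ :=
        (Set.one_lt_ncard (s := Γ.neighborSet b ∩ {v | g v = v})).mp (by omega)
      exact h₁₂ (hinj (neighborSet_eq_of_valency_three g hval hno h₁ h₂ hb₁.symm hb₂.symm))
    · obtain ⟨v₁, ⟨hb₁, h₁⟩, v₂, ⟨hb₂, h₂⟩, v₃, ⟨hb₃, h₃⟩, h₁₂, h₁₃, h₂₃⟩ :=
        (Set.two_lt_ncard (s := Γ.neighborSet b ∩ {v | g v = v})).mp (by omega)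
      exact not_injective_neighborSet_of_valency_four g hval hat hno h₁ h₂ h₃ h₁₂ h₁₃ h₂₃
        hb₁.symm hb₂.symm hb₃.symm hinj
  have hcount := card_fixed_mul_le_card_moved_mul g hval hno hm
  have hsum := Finset.card_filter_add_card_filter_not (s := Finset.univ) fun v => g v = v
  rw [Nat.card_eq_fintype_card, Nat.card_eq_fintype_card, Fintype.card_subtype] at hfix
  rw [Finset.card_univ] at hsum
  simp only [ne_eq] at hcount
  rcases hk with rfl | rfl <;> omega

end FixedPoints

def twinClass (Γ : SimpleGraph V) (x : V) : Set V := {y | Γ.neighborSet y = Γ.neighborSet x}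

@[simp]
lemma mem_twinClass {x y : V} : y ∈ Γ.twinClass x ↔ Γ.neighborSet y = Γ.neighborSet x := Iff.rfl

lemma mem_twinClass_self (x : V) : x ∈ Γ.twinClass x := rfl

lemma twinClass_subset_neighborSet {x y : V} (h : Γ.Adj x y) :
    Γ.twinClass y ⊆ Γ.neighborSet x := fun z hz => by
  simpa [adj_comm] using (show x ∈ Γ.neighborSet z from hz ▸ h.symm)

lemma notMem_twinClass_of_adj {x y : V} (h : Γ.Adj x y) : y ∉ Γ.twinClass x :=
  fun hy => Γ.irrefl (twinClass_subset_neighborSet h hy.symm)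

lemma disjoint_twinClass {x y : V} (h : y ∉ Γ.twinClass x) :
    Disjoint (Γ.twinClass x) (Γ.twinClass y) :=
  Set.disjoint_left.mpr fun _ hx hy => h (hy.symm.trans hx)

lemma Iso.image_twinClass (e : Γ ≃g Γ) (x : V) : e '' Γ.twinClass x = Γ.twinClass (e x) := by
  ext z
  obtain ⟨y, rfl⟩ := e.surjective z
  rw [e.injective.mem_set_image, mem_twinClass, mem_twinClass, ← e.image_neighborSet,
    ← e.image_neighborSet, Set.image_eq_image e.injective]

lemma VertexTransitive.ncard_twinClass_eq (hvt : VertexTransitive Γ) (x y : V) :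
    (Γ.twinClass x).ncard = (Γ.twinClass y).ncard := by
  obtain ⟨e, rfl⟩ := hvt x y
  rw [← e.image_twinClass, Set.ncard_image_of_injective _ e.injective]

lemma VertexTransitive.one_lt_ncard_twinClass [Finite V] (hvt : VertexTransitive Γ)
    (htwin : ¬ Function.Injective Γ.neighborSet) (x : V) : 1 < (Γ.twinClass x).ncard := by
  obtain ⟨a, b, hab, hne⟩ := Function.not_injective_iff.mp htwin
  rw [hvt.ncard_twinClass_eq x a]
  exact (Set.one_lt_ncard_iff).mpr ⟨a, b, mem_twinClass_self a, hab.symm, hne⟩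

lemma VertexTransitive.ncard_twinClass_eq_or_two_mul_le [Finite V] (hvt : VertexTransitive Γ)
    {k : ℕ} (hval : ∀ v, (Γ.neighborSet v).ncard = k) {x y : V} (hxy : Γ.Adj x y) :
    (Γ.twinClass y).ncard = k ∨ 2 * (Γ.twinClass y).ncard ≤ k := by
  refine or_iff_not_imp_left.mpr fun hck => ?_
  have hle := Set.ncard_le_ncard (twinClass_subset_neighborSet hxy)
  rw [hval] at hle
  obtain ⟨z, hz, hzy⟩ := Set.exists_mem_notMem_of_ncard_lt_ncard
    (s := Γ.twinClass y) (t := Γ.neighborSet x) (by rw [hval]; omega)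
  have hunion := Set.ncard_le_ncard (Set.union_subset (twinClass_subset_neighborSet hxy)
    (twinClass_subset_neighborSet hz))
  rw [Set.ncard_union_eq (disjoint_twinClass hzy), hvt.ncard_twinClass_eq z y, hval] at hunion
  omega

lemma exists_neighborSet_eq_twinClass_union_twinClass [Finite V] {m : ℕ} {x : V}
    (hval : (Γ.neighborSet x).ncard = 2 * m) (hc : ∀ v, (Γ.twinClass v).ncard = m) :
    ∃ y z, z ∉ Γ.twinClass y ∧ Γ.neighborSet x = Γ.twinClass y ∪ Γ.twinClass z := by
  have hm : m ≠ 0 := hc x ▸ Set.ncard_ne_zero_of_mem (mem_twinClass_self x)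
  obtain ⟨y, hy⟩ := Set.nonempty_of_ncard_ne_zero (s := Γ.neighborSet x) (by omega)
  obtain ⟨z, hz, hzy⟩ := Set.exists_mem_notMem_of_ncard_lt_ncard
    (s := Γ.twinClass y) (t := Γ.neighborSet x) (by rw [hc, hval]; omega)
  refine ⟨y, z, hzy, (Set.eq_of_subset_of_ncard_le (Set.union_subset
    (twinClass_subset_neighborSet hy) (twinClass_subset_neighborSet hz)) ?_).symm⟩
  rw [Set.ncard_union_eq (disjoint_twinClass hzy), hc, hc, hval]
  omega

lemma nonempty_iso_completeBipartiteGraph_of_adj_iff [Finite V] (p : V → Prop) {m n : ℕ}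
    (hadj : ∀ u v, Γ.Adj u v ↔ (p u ↔ ¬ p v)) (hm : Nat.card {v // p v} = m)
    (hn : Nat.card {v // ¬ p v} = n) :
    Nonempty (Γ ≃g completeBipartiteGraph (Fin m) (Fin n)) := by
  classical
  let e : V ≃ Fin m ⊕ Fin n := (Equiv.sumCompl p).symm.trans
    (Equiv.sumCongr (Finite.equivFinOfCardEq hm) (Finite.equivFinOfCardEq hn))
  refine ⟨⟨e, fun {u v} => ?_⟩⟩
  rw [hadj]
  by_cases hu : p u <;> by_cases hv : p v <;>
    simp [e, Equiv.sumCompl_symm_apply_of_pos, Equiv.sumCompl_symm_apply_of_neg, hu, hv]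

theorem Connected.nonempty_iso_completeBipartiteGraph [Finite V] (hconn : Γ.Connected) {k : ℕ}
    (hval : ∀ v, (Γ.neighborSet v).ncard = k) (hc : ∀ v, (Γ.twinClass v).ncard = k) :
    Nonempty (Γ ≃g completeBipartiteGraph (Fin k) (Fin k)) := by
  have hN : ∀ x y, Γ.Adj x y → Γ.neighborSet x = Γ.twinClass y := fun x y h =>
    (Set.eq_of_subset_of_ncard_le (twinClass_subset_neighborSet h) (by rw [hval, hc])).symm
  obtain ⟨x₀⟩ := hconn.nonempty
  obtain ⟨y₀, hy₀⟩ := Set.nonempty_of_ncard_ne_zero (s := Γ.neighborSet x₀)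
    (hval x₀ ▸ hc x₀ ▸ Set.ncard_ne_zero_of_mem (mem_twinClass_self x₀))
  have hcompl : (Γ.twinClass x₀)ᶜ = Γ.twinClass y₀ := by
    refine Set.ext fun v => ⟨fun hv => ?_,
      fun hv hv₀ => notMem_twinClass_of_adj hy₀ (hv.symm.trans hv₀)⟩
    refine (hconn.preconnected.mem_of_adj_closed (s := Γ.twinClass x₀ ∪ Γ.twinClass y₀)
      (.inl (mem_twinClass_self x₀)) (fun u w huw hu => ?_) v).resolve_left hv
    rcases hu with hu | hu
    · exact .inr (by rw [← hN x₀ y₀ hy₀, ← hu]; exact huw)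
    · exact .inl (by rw [← hN y₀ x₀ hy₀.symm, ← hu]; exact huw)
  refine nonempty_iso_completeBipartiteGraph_of_adj_iff (· ∈ Γ.twinClass x₀) (fun u v => ?_)
    (by rw [Nat.card_coe_set_eq, hc])
    (show Nat.card ↥(Γ.twinClass x₀)ᶜ = k by rw [Nat.card_coe_set_eq, hcompl, hc])
  by_cases hu : u ∈ Γ.twinClass x₀
  · rw [← mem_neighborSet, hu, hN x₀ y₀ hy₀, ← hcompl]
    simp [hu]
  · have hu' : u ∈ Γ.twinClass y₀ := hcompl ▸ hu
    rw [← mem_neighborSet, hu', hN y₀ x₀ hy₀.symm]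
    simp [hu]

lemma praegerXu_one_adj {r : ℕ} {a b : ZMod r × (Fin 1 → ZMod 2)} :
    (praegerXu r 1).Adj a b ↔ a ≠ b ∧ (b.1 = a.1 + 1 ∨ a.1 = b.1 + 1) := by
  have h1 (i : Fin 1) : ¬ (i : ℕ) + 1 < 1 := by omega
  simp only [praegerXu, fromRel_adj, h1, IsEmpty.forall_iff, implies_true, and_true]

lemma nonempty_praegerXu_four_one_iso :
    Nonempty (praegerXu 4 1 ≃g completeBipartiteGraph (Fin 4) (Fin 4)) := by
  refine nonempty_iso_completeBipartiteGraph_of_adj_iff (fun a => Even a.1.val)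
    (fun a b => ?_) (by rw [Nat.card_eq_fintype_card]; decide)
    (by rw [Nat.card_eq_fintype_card]; decide)
  have h : ∀ x y : ZMod 4, (y = x + 1 ∨ x = y + 1) ↔ (Even x.val ↔ ¬ Even y.val) := by decide
  rw [praegerXu_one_adj, ← h]
  exact and_iff_right_of_imp fun hsucc hab => by
    subst hab
    simp only [left_eq_add, or_self] at hsucc
    exact absurd hsucc (by decide)

/-- `C(r,1)` is the cycle on `ZMod r` with every vertex doubled into a pair of twins. -/
lemma nonempty_iso_praegerXu_one {r : ℕ} (π : V → ZMod r)
    (hfib : ∀ i, Nat.card {v // π v = i} = 2)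
    (hadj : ∀ u v, Γ.Adj u v ↔ (π v = π u + 1 ∨ π u = π v + 1)) :
    Nonempty (Γ ≃g praegerXu r 1) := by
  have hfib' (i : ZMod r) : {v // π v = i} ≃ (Fin 1 → ZMod 2) :=
    have := Nat.finite_of_card_ne_zero (hfib i ▸ two_ne_zero)
    (Finite.equivFinOfCardEq (hfib i)).trans (Equiv.funUnique (Fin 1) (ZMod 2)).symm
  let e : V ≃ ZMod r × (Fin 1 → ZMod 2) := (Equiv.sigmaFiberEquiv π).symm.trans
    ((Equiv.sigmaCongrRight hfib').trans (Equiv.sigmaEquivProd _ _))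
  refine ⟨⟨e, fun {u v} => ?_⟩⟩
  rw [praegerXu_one_adj, hadj]
  exact ⟨fun h => h.2, fun h => ⟨e.injective.ne ((hadj u v).mpr h).ne, h⟩⟩

theorem Connected.exists_equiv_zmod_of_ncard_neighborSet_eq_two [Finite V]
    (hconn : Γ.Connected) (hdeg : ∀ v, (Γ.neighborSet v).ncard = 2) :
    ∃ r, 3 ≤ r ∧ ∃ e : ZMod r ≃ V, ∀ i j, Γ.Adj (e i) (e j) ↔ (j = i + 1 ∨ i = j + 1) := by
  classical
  have := Fintype.ofFinite V
  obtain ⟨v⟩ := hconn.nonempty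
  have hcyc : Γ.IsCycles := fun w _ => hdeg w
  obtain ⟨p, hp, hverts⟩ := hcyc.exists_cycle_toSubgraph_verts_eq_connectedComponentSupp
    (c := Γ.connectedComponentMk v) rfl (Set.nonempty_of_ncard_ne_zero (by simp [hdeg]))
  have hsupp (w : V) : w ∈ p.toSubgraph.verts := by
    rw [hverts, ConnectedComponent.mem_supp_iff, ConnectedComponent.eq]
    exact hconn.preconnected w v
  have hr := hp.three_le_length
  have : NeZero p.length := ⟨by omega⟩
  let φ : ZMod p.length → V := fun i => p.getVert i.val
  have hφ : ∀ n ≤ p.length, φ n = p.getVert n := by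
    intro n hn
    rcases hn.lt_or_eq with h | rfl
    · simp [φ, ZMod.val_cast_of_lt h]
    · simp [φ]
  have hinj : Function.Injective φ := fun i j h => ZMod.val_injective _ <|
    hp.getVert_injOn' (by simp; have := i.val_lt; omega) (by simp; have := j.val_lt; omega) h
  have hsurj : Function.Surjective φ := fun w => by
    obtain ⟨n, rfl, hn⟩ := Walk.mem_support_iff_exists_getVert.mp
      (p.mem_verts_toSubgraph.mp (hsupp w))
    exact ⟨n, hφ n hn⟩
  have hφ_succ (i : ZMod p.length) : p.getVert (i.val + 1) = φ (i + 1) := by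
    rw [← hφ _ i.val_lt, Nat.cast_succ, ZMod.natCast_zmod_val]
  refine ⟨p.length, hr, Equiv.ofBijective φ ⟨hinj, hsurj⟩, fun i j => ?_⟩
  change Γ.Adj (φ i) (φ j) ↔ _
  rw [← hp.adj_toSubgraph_iff_of_isCycles hcyc (hsupp _), Walk.toSubgraph_adj_iff]
  constructor
  · rintro ⟨n, hn, hlt⟩
    rw [← hφ n hlt.le, ← hφ (n + 1) hlt, Nat.cast_succ] at hn
    rcases Sym2.eq_iff.mp hn with ⟨h₁, h₂⟩ | ⟨h₁, h₂⟩
    · exact .inl (by rw [← hinj h₁, ← hinj h₂])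
    · exact .inr (by rw [← hinj h₁, ← hinj h₂])
  · rintro (rfl | rfl)
    · exact ⟨i.val, by rw [hφ_succ], i.val_lt⟩
    · exact ⟨j.val, by rw [hφ_succ, Sym2.eq_swap], j.val_lt⟩

/-- Adjacency in `Γ` only depends on the twin classes of the endpoints. -/
def twinQuotient (Γ : SimpleGraph V) : SimpleGraph (Quotient (Setoid.ker Γ.neighborSet)) where
  Adj := Quotient.lift₂ Γ.Adj fun a₁ b₁ a₂ b₂ (ha : Γ.neighborSet a₁ = Γ.neighborSet a₂)
      (hb : Γ.neighborSet b₁ = Γ.neighborSet b₂) => propext <| by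
    rw [← mem_neighborSet, ha, mem_neighborSet, adj_comm, ← mem_neighborSet, hb,
      mem_neighborSet, adj_comm]
  symm := ⟨fun a b => Quotient.inductionOn₂ a b fun _ _ h => h.symm⟩
  loopless := ⟨fun a => Quotient.inductionOn a Γ.loopless.irrefl⟩

theorem Connected.exists_iso_praegerXu [Finite V] (hconn : Γ.Connected)
    (hval : ∀ v, (Γ.neighborSet v).ncard = 4) (hc : ∀ v, (Γ.twinClass v).ncard = 2) :
    ∃ r, 3 ≤ r ∧ Nonempty (Γ ≃g praegerXu r 1) := by
  let π : Γ →g Γ.twinQuotient := ⟨Quotient.mk _, fun h => h⟩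
  have hπ (u v : V) : π u = π v ↔ u ∈ Γ.twinClass v := Quotient.eq
  have hdeg (C : Quotient (Setoid.ker Γ.neighborSet)) :
      (Γ.twinQuotient.neighborSet C).ncard = 2 := by
    induction C using Quotient.ind with | _ x
    obtain ⟨y, z, hzy, hx⟩ := exists_neighborSet_eq_twinClass_union_twinClass (hval x) hc
    have : Γ.twinQuotient.neighborSet (π x) = {π y, π z} := by
      ext C
      induction C using Quotient.ind with | _ v
      change Γ.Adj x v ↔ π v = π y ∨ π v = π z
      rw [← mem_neighborSet, hx, hπ, hπ]
      rfl
    change (Γ.twinQuotient.neighborSet (π x)).ncard = 2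
    rw [this, Set.ncard_pair fun h => hzy ((hπ _ _).mp h.symm)]
  obtain ⟨r, hr, e, he⟩ :=
    (hconn.map π Quotient.mk_surjective).exists_equiv_zmod_of_ncard_neighborSet_eq_two hdeg
  refine ⟨r, hr, nonempty_iso_praegerXu_one (fun v => e.symm (π v)) (fun i => ?_)
    (fun u v => ?_)⟩
  · obtain ⟨x, hx⟩ := Quotient.mk_surjective (e i)
    rw [← hc x, ← Nat.card_coe_set_eq]
    exact Nat.card_congr (Equiv.subtypeEquivRight fun v => by
      rw [Equiv.symm_apply_eq, ← hx, ← hπ]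
      rfl)
  · rw [← he, e.apply_symm_apply, e.apply_symm_apply]
    rfl

end SimpleGraph

theorem statement16_general {V : Type*} [Fintype V] (k : ℕ) (hk : k = 3 ∨ k = 4)
    (Γ : SimpleGraph V) (hconn : Γ.Connected)
    (hval : ∀ v : V, Nat.card (Γ.neighborSet v) = k)
    (hat : ArcTransitive Γ)
    (g : Γ ≃g Γ) (hfpr : fpr (fun v => g v) > 1 / 3)
    (hnoarc : ¬ ∃ u w : V, Γ.Adj u w ∧ g u = u ∧ g w = w) :
    (k = 4 ∧ ∃ r : ℕ, 3 ≤ r ∧ Nonempty (Γ ≃g praegerXu r 1)) ∨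
      (k = 3 ∧ Nonempty (Γ ≃g completeBipartiteGraph (Fin 3) (Fin 3))) := by
  simp only [Nat.card_coe_set_eq] at hval
  have hno (u w : V) (h : Γ.Adj u w) (hu : g u = u) : g w ≠ w :=
    fun hw => hnoarc ⟨u, w, h, hu, hw⟩
  have htwin := not_injective_neighborSet g hk hval hat hno
    (natCard_lt_mul_natCard_fixedPoints (n := 3) (by norm_num) (by exact_mod_cast hfpr))
  have hvt := hat.vertexTransitive fun v => Set.nonempty_of_ncard_ne_zero (by rw [hval]; omega)
  obtain ⟨x⟩ := hconn.nonempty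
  obtain ⟨y, hxy⟩ := Set.nonempty_of_ncard_ne_zero (s := Γ.neighborSet x) (by rw [hval]; omega)
  have hc (v : V) := hvt.ncard_twinClass_eq v y
  rcases hvt.ncard_twinClass_eq_or_two_mul_le hval hxy with hck | hck
  · have hiso := hconn.nonempty_iso_completeBipartiteGraph hval fun v => (hc v).trans hck
    rcases hk with rfl | rfl
    · exact .inr ⟨rfl, hiso⟩
    · exact .inl ⟨rfl, 4, by norm_num,
        hiso.map fun e => e.trans nonempty_praegerXu_four_one_iso.some.symm⟩
  · have := hvt.one_lt_ncard_twinClass htwin y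
    have hk4 : k = 4 := by omega
    have hc2 : (Γ.twinClass y).ncard = 2 := by omega
    exact .inl ⟨hk4, hconn.exists_iso_praegerXu (hk4 ▸ hval) fun v => (hc v).trans hc2⟩

/-- Theorem 4.3: if a connected `k`-valent arc-transitive graph (`k ∈ {3,4}`) has a
non-identity automorphism `g` fixing no arc and more than 1/3 of the vertices, then
`k = 4` and `Γ ≅ C(r,1)`, or `k = 3` and `Γ ≅ K_{3,3}`. -/
theorem statement16 {V : Type*} [Fintype V] (k : ℕ) (hk : k = 3 ∨ k = 4)
    (Γ : SimpleGraph V) (hconn : Γ.Connected)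
    (hval : ∀ v : V, Nat.card (Γ.neighborSet v) = k)
    (hat : ArcTransitive Γ)
    (g : Γ ≃g Γ) (hg : ∃ v, g v ≠ v) (hfpr : fpr (fun v => g v) > 1 / 3)
    (hnoarc : ¬ ∃ u w : V, Γ.Adj u w ∧ g u = u ∧ g w = w) :
    (k = 4 ∧ ∃ r : ℕ, 3 ≤ r ∧ Nonempty (Γ ≃g praegerXu r 1)) ∨
      (k = 3 ∧ Nonempty (Γ ≃g completeBipartiteGraph (Fin 3) (Fin 3))) :=
  statement16_general k hk Γ hconn hval hat g hfpr hnoarc
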